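/- arXiv:1204.3794 — 2 statements merged into one kernel-verified Lean document; each statement's English description precedes it below -/
import Mathlib

section
/- Let K satisfy |K(x-u)| ≤ C₀/|x-u|ⁿ. Let Ω ⊂ ℝⁿ, 1 < p < ∞, 0 < t < s < 1, 1/p + 1/q = 1. For f : Ω → ℂ define g₂(x,y) = ∫_{Ω ∩ {|x-u| < 4|x-y|}} K(x-u)(f(u) - f(x)) du (absolutely convergent under the Besov hypothesis). Then ∫_Ω ∫_Ω |g₂(x,y)|^p / |x-y|^{n+sp} dx dy ≤ C ∫_Ω ∫_Ω |f(u) - f(x)|^p / |x-u|^{n+sp} du dx, with C depending only on n, p, s, t, C₀. -/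
/-!
Hölder's inequality with the splitting `|x-u|^{-n} = |x-u|^{-(n/p+t)} · |x-u|^{t-n/q}` gives
`|g₂(x,y)| ≤ C |x-y|^t (∫_{Ω ∩ B(x,4|x-y|)} |f(u)-f(x)|^p / |x-u|^{n+tp} du)^{1/p}`,
because `∫_{B(x,R)} |x-u|^{tq-n} du` is a multiple of `R^{tq}`. After dividing by `|x-y|^{n+sp}`
and exchanging the order of integration, the `y`-integral becomes
`∫_{|x-y| > |x-u|/4} |x-y|^{(t-s)p-n} dy`, a multiple of `|x-u|^{(t-s)p}` since `t < s`;
it turns the weight `|x-u|^{-(n+tp)}` into `|x-u|^{-(n+sp)}`. Both radial integrals are computed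
in polar coordinates.
-/

open MeasureTheory Set Metric
open scoped ENNReal

theorem lintegral_Ioo_rpow {c R : ℝ} (hc : -1 < c) (hR : 0 < R) :
    ∫⁻ r in Ioo 0 R, ENNReal.ofReal (r ^ c) = ENNReal.ofReal (R ^ (c + 1) / (c + 1)) := by
  rw [← ofReal_integral_eq_lintegral_ofReal, ← integral_Ioc_eq_integral_Ioo,
    ← intervalIntegral.integral_of_le hR.le, integral_rpow (Or.inl hc),
    Real.zero_rpow (by linarith), sub_zero]
  · exact (intervalIntegral.integrableOn_Ioo_rpow_iff hR).mpr hc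
  · filter_upwards [ae_restrict_mem measurableSet_Ioo] with r hr
    exact Real.rpow_nonneg hr.1.le c

theorem lintegral_Ioi_rpow {c r : ℝ} (hc : c < -1) (hr : 0 < r) :
    ∫⁻ y in Ioi r, ENNReal.ofReal (y ^ c) = ENNReal.ofReal (-r ^ (c + 1) / (c + 1)) := by
  rw [← ofReal_integral_eq_lintegral_ofReal (integrableOn_Ioi_rpow_of_lt hc hr),
    integral_Ioi_rpow_of_lt hc hr]
  filter_upwards [ae_restrict_mem measurableSet_Ioi] with y hy
  exact Real.rpow_nonneg (hr.trans hy).le c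

theorem setLIntegral_Ioi_pow_mul_indicator_rpow {S : Set ℝ} (hS : MeasurableSet S) (k : ℕ)
    (a : ℝ) :
    ∫⁻ r in Ioi 0, ENNReal.ofReal (r ^ k) * S.indicator (fun r => ENNReal.ofReal (r ^ a)) r =
      ∫⁻ r in S ∩ Ioi 0, ENNReal.ofReal (r ^ ((k : ℝ) + a)) := by
  rw [← Measure.restrict_restrict hS, ← lintegral_indicator hS]
  refine setLIntegral_congr_fun measurableSet_Ioi fun r (hr : 0 < r) => ?_
  by_cases hrS : r ∈ S
  · simp only [indicator_of_mem hrS]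
    rw [← ENNReal.ofReal_mul (by positivity), Real.rpow_add hr, Real.rpow_natCast]
  · simp [indicator_of_notMem hrS]

theorem lintegral_mul_setLIntegral_le_lintegral_compl_closedBall_mul {E : Type*}
    [NormedAddCommGroup E] [MeasurableSpace E] [OpensMeasurableSpace E] (μ : Measure E) [SFinite μ]
    (x : E) (Ω : Set E) {c : ℝ} (hc : 0 < c) {w G : E → ℝ≥0∞} (hw : Measurable w)
    (hG : Measurable G) :
    ∫⁻ y in Ω, w y * ∫⁻ u in Ω ∩ {u | ‖x - u‖ < c * ‖x - y‖}, G u ∂μ ∂μ ≤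
      ∫⁻ u in Ω, (∫⁻ y in (closedBall x (‖x - u‖ / c))ᶜ, w y ∂μ) * G u ∂μ := by
  set S : E → Set E := fun y => {u | ‖x - u‖ < c * ‖x - y‖}
  have hd : Measurable fun u : E => ‖x - u‖ := (by fun_prop : Continuous _).measurable
  have hS : ∀ y, MeasurableSet (S y) := fun y => measurableSet_lt hd measurable_const
  have hSG : Measurable fun z : E × E => (S z.1).indicator G z.2 :=
    (hG.comp measurable_snd).indicator
      (measurableSet_lt (hd.comp measurable_snd) ((hd.comp measurable_fst).const_mul c))
  calc ∫⁻ y in Ω, w y * ∫⁻ u in Ω ∩ S y, G u ∂μ ∂μ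
      = ∫⁻ y in Ω, ∫⁻ u in Ω, w y * (S y).indicator G u ∂μ ∂μ := by
        refine lintegral_congr fun y => ?_
        rw [lintegral_const_mul _ (hG.indicator (hS y)), lintegral_indicator (hS y),
          Measure.restrict_restrict (hS y), inter_comm]
    _ = ∫⁻ u in Ω, ∫⁻ y in Ω, w y * (S y).indicator G u ∂μ ∂μ :=
        lintegral_lintegral_swap ((hw.comp measurable_fst).mul hSG).aemeasurable
    _ ≤ ∫⁻ u in Ω, ∫⁻ y, (closedBall x (‖x - u‖ / c))ᶜ.indicator w y * G u ∂μ ∂μ := by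
        refine lintegral_mono fun u =>
          (setLIntegral_le_lintegral _ _).trans (lintegral_mono fun y => ?_)
        by_cases hu : u ∈ S y
        · have hy : y ∈ (closedBall x (‖x - u‖ / c))ᶜ := by
            simp only [mem_compl_iff, mem_closedBall, dist_eq_norm, not_le, norm_sub_rev y x]
            exact (div_lt_iff₀' hc).mpr hu
          simp only [indicator_of_mem hu, indicator_of_mem hy, le_refl]
        · simp [indicator_of_notMem hu]
    _ = ∫⁻ u in Ω, (∫⁻ y in (closedBall x (‖x - u‖ / c))ᶜ, w y ∂μ) * G u ∂μ := by
        refine lintegral_congr fun u => ?_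
        rw [lintegral_mul_const _ (hw.indicator measurableSet_closedBall.compl),
          lintegral_indicator measurableSet_closedBall.compl]

theorem ofReal_norm_setIntegral_smul_le {E F : Type*} [NormedAddCommGroup E] [MeasurableSpace E]
    [NormedAddCommGroup F] [NormedSpace ℝ F] (μ : Measure E) [NullSingletonClass μ] (x : E)
    (A : Set E) {α C₀ : ℝ} (hC₀ : 0 ≤ C₀) {K : E → ℝ} (hK : ∀ z, z ≠ 0 → |K z| ≤ C₀ / ‖z‖ ^ α)
    (g : E → F) :
    ENNReal.ofReal ‖∫ u in A, K (x - u) • g u ∂μ‖ ≤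
      ENNReal.ofReal C₀ * ∫⁻ u in A, ENNReal.ofReal (‖g u‖ / ‖x - u‖ ^ α) ∂μ := by
  have hpt : ∀ u, u ≠ x →
      ‖K (x - u) • g u‖ₑ ≤ ENNReal.ofReal C₀ * ENNReal.ofReal (‖g u‖ / ‖x - u‖ ^ α) := by
    intro u hu
    rw [← ofReal_norm, ← ENNReal.ofReal_mul hC₀, norm_smul, Real.norm_eq_abs, ← mul_div_assoc,
      mul_div_right_comm]
    exact ENNReal.ofReal_le_ofReal
      (mul_le_mul_of_nonneg_right (hK _ (sub_ne_zero.mpr hu.symm)) (norm_nonneg _))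
  calc ENNReal.ofReal ‖∫ u in A, K (x - u) • g u ∂μ‖
      ≤ ∫⁻ u in A, ‖K (x - u) • g u‖ₑ ∂μ := by
        rw [ofReal_norm]
        exact enorm_integral_le_lintegral_enorm _
    _ ≤ ∫⁻ u in A, ENNReal.ofReal C₀ * ENNReal.ofReal (‖g u‖ / ‖x - u‖ ^ α) ∂μ :=
        lintegral_mono_ae (ae_restrict_of_ae ((Measure.ae_ne μ x).mono hpt))
    _ = _ := lintegral_const_mul' _ _ ENNReal.ofReal_ne_top

theorem ofReal_finrank_mul_measureReal_ball {E : Type*} [NormedAddCommGroup E] [NormedSpace ℝ E]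
    [FiniteDimensional ℝ E] [MeasurableSpace E] (μ : Measure E) [μ.IsAddHaarMeasure] :
    (Module.finrank ℝ E : ℝ≥0∞) * μ (ball 0 1) =
      ENNReal.ofReal (Module.finrank ℝ E * μ.real (ball 0 1)) := by
  rw [ENNReal.ofReal_mul (Nat.cast_nonneg _), ENNReal.ofReal_natCast,
    ofReal_measureReal measure_ball_lt_top.ne]

-- `d` is the dimension and `ω` the measure of the unit ball; the first factor comes from Hölder's
-- inequality, the second from the tail integral `∫_{|z| > r} |z|^{(t-s)p-d} dz`.
noncomputable def kernelBesovConst (d ω p q s t C₀ : ℝ) : ℝ :=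
  (C₀ * (d * ω / (t * q)) ^ (1 / q) * 4 ^ t) ^ p * (d * ω * 4 ^ ((s - t) * p) / ((s - t) * p))

section AddHaar

local notation "dim" => Module.finrank ℝ

variable {E : Type*} [NormedAddCommGroup E] [NormedSpace ℝ E] [FiniteDimensional ℝ E]
  [MeasurableSpace E] [BorelSpace E] [Nontrivial E] (μ : Measure E) [μ.IsAddHaarMeasure]

theorem lintegral_fun_norm_addHaar {h : ℝ → ℝ≥0∞} (hh : Measurable h) :
    ∫⁻ x, h ‖x‖ ∂μ =
      dim E * μ (ball 0 1) * ∫⁻ r in Ioi (0 : ℝ), ENNReal.ofReal (r ^ (dim E - 1)) * h r := by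
  have hh' : Measurable fun r : Ioi (0 : ℝ) => h r := hh.comp measurable_subtype_coe
  calc ∫⁻ x, h ‖x‖ ∂μ = ∫⁻ x : ({(0)}ᶜ : Set E), h ‖x.1‖ ∂(μ.comap (↑)) := by
        rw [lintegral_subtype_comap (measurableSet_singleton _).compl (fun x => h ‖x‖),
          restrict_compl_singleton]
    _ = ∫⁻ z, h z.2 ∂μ.toSphere.prod (.volumeIoiPow (dim E - 1)) := by
        simpa using (μ.measurePreserving_homeomorphUnitSphereProd.lintegral_comp_emb
          (Homeomorph.measurableEmbedding _) (h ∘ Subtype.val ∘ Prod.snd))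
    _ = μ.toSphere univ * ∫⁻ r, h r ∂.volumeIoiPow (dim E - 1) := by
        simpa using lintegral_prod_mul (f := fun _ => 1) (μ := μ.toSphere)
          (ν := .volumeIoiPow (dim E - 1)) aemeasurable_const hh'.aemeasurable
    _ = _ := by
        rw [Measure.toSphere_apply_univ, Measure.volumeIoiPow,
          lintegral_withDensity_eq_lintegral_mul _ (by fun_prop) hh',
          ← lintegral_subtype_comap measurableSet_Ioi
            (fun r => ENNReal.ofReal (r ^ (dim E - 1)) * h r)]
        rfl

theorem lintegral_fun_norm_sub_addHaar (x : E) {h : ℝ → ℝ≥0∞} (hh : Measurable h) :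
    ∫⁻ u, h ‖x - u‖ ∂μ =
      dim E * μ (ball 0 1) * ∫⁻ r in Ioi (0 : ℝ), ENNReal.ofReal (r ^ (dim E - 1)) * h r := by
  simp_rw [norm_sub_rev x]
  rw [lintegral_sub_right_eq_self (fun v => h ‖v‖) x, lintegral_fun_norm_addHaar μ hh]

theorem lintegral_ball_rpow_norm_sub (x : E) {a R : ℝ} (ha : -(dim E : ℝ) < a) (hR : 0 < R) :
    ∫⁻ u in ball x R, ENNReal.ofReal (‖x - u‖ ^ a) ∂μ =
      ENNReal.ofReal (dim E * μ.real (ball 0 1) * (R ^ (dim E + a) / (dim E + a))) := by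
  have hd : ((dim E - 1 : ℕ) : ℝ) = dim E - 1 := Nat.cast_pred Module.finrank_pos
  have hind : ∀ u, (ball x R).indicator (fun u => ENNReal.ofReal (‖x - u‖ ^ a)) u =
      (Iio R).indicator (fun r => ENNReal.ofReal (r ^ a)) ‖x - u‖ := fun u => by
    simp [indicator, dist_eq_norm, norm_sub_rev u x]
  rw [← lintegral_indicator measurableSet_ball, lintegral_congr hind,
    lintegral_fun_norm_sub_addHaar μ x ((by fun_prop : Measurable _).indicator measurableSet_Iio),
    setLIntegral_Ioi_pow_mul_indicator_rpow measurableSet_Iio, Iio_inter_Ioi, hd,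
    lintegral_Ioo_rpow (by linarith) hR, ofReal_finrank_mul_measureReal_ball,
    ← ENNReal.ofReal_mul (by positivity), show (dim E : ℝ) - 1 + a + 1 = dim E + a by ring]

theorem lintegral_compl_closedBall_rpow_norm_sub (x : E) {b r : ℝ} (hb : b < -(dim E : ℝ))
    (hr : 0 < r) :
    ∫⁻ u in (closedBall x r)ᶜ, ENNReal.ofReal (‖x - u‖ ^ b) ∂μ =
      ENNReal.ofReal (dim E * μ.real (ball 0 1) * (r ^ (dim E + b) / -(dim E + b))) := by
  have hd : ((dim E - 1 : ℕ) : ℝ) = dim E - 1 := Nat.cast_pred Module.finrank_pos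
  have hind : ∀ u, (closedBall x r)ᶜ.indicator (fun u => ENNReal.ofReal (‖x - u‖ ^ b)) u =
      (Ioi r).indicator (fun y => ENNReal.ofReal (y ^ b)) ‖x - u‖ := fun u => by
    simp [indicator, dist_eq_norm, norm_sub_rev u x]
  rw [← lintegral_indicator measurableSet_closedBall.compl, lintegral_congr hind,
    lintegral_fun_norm_sub_addHaar μ x ((by fun_prop : Measurable _).indicator measurableSet_Ioi),
    setLIntegral_Ioi_pow_mul_indicator_rpow measurableSet_Ioi,
    inter_eq_left.mpr (Ioi_subset_Ioi hr.le), hd, lintegral_Ioi_rpow (by linarith) hr,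
    ofReal_finrank_mul_measureReal_ball, ← ENNReal.ofReal_mul (by positivity),
    show (dim E : ℝ) - 1 + b + 1 = dim E + b by ring, neg_div, div_neg]

theorem rpow_lintegral_rpow_norm_sub_le_of_subset_ball {q t R : ℝ} (hq : 0 < q) (ht : 0 < t)
    (hR : 0 < R) (x : E) {A : Set E} (hA : A ⊆ ball x R) :
    (∫⁻ u in A, ENNReal.ofReal (‖x - u‖ ^ (t * q - dim E)) ∂μ) ^ (1 / q) ≤
      ENNReal.ofReal ((dim E * μ.real (ball 0 1) / (t * q)) ^ (1 / q) * R ^ t) := by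
  have hball := lintegral_ball_rpow_norm_sub μ x (a := t * q - dim E) (by nlinarith) hR
  rw [add_sub_cancel] at hball
  refine (ENNReal.rpow_le_rpow ((lintegral_mono_set hA).trans_eq hball) (by positivity)).trans_eq ?_
  rw [ENNReal.ofReal_rpow_of_nonneg (by positivity) (by positivity), mul_div_assoc',
    mul_div_right_comm, Real.mul_rpow (by positivity) (by positivity), ← Real.rpow_mul hR.le]
  field_simp

theorem lintegral_div_rpow_finrank_le_of_subset_ball {F : Type*} [NormedAddCommGroup F]
    {p q t R : ℝ} (hpq : p.HolderConjugate q) (ht : 0 < t) (hR : 0 < R) (x : E) {A : Set E}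
    (hA : A ⊆ ball x R) {g : E → F} (hg : AEStronglyMeasurable g μ) :
    ∫⁻ u in A, ENNReal.ofReal (‖g u‖ / ‖x - u‖ ^ (dim E : ℝ)) ∂μ ≤
      (∫⁻ u in A, ENNReal.ofReal (‖g u‖ ^ p / ‖x - u‖ ^ (dim E + t * p)) ∂μ) ^ (1 / p) *
        ENNReal.ofReal ((dim E * μ.real (ball 0 1) / (t * q)) ^ (1 / q) * R ^ t) := by
  set d : ℝ := (dim E : ℝ)
  have hp := hpq.pos
  have hq := hpq.symm.pos
  set φ : E → ℝ≥0∞ := fun u => ENNReal.ofReal (‖g u‖ / ‖x - u‖ ^ (d / p + t))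
  set ψ : E → ℝ≥0∞ := fun u => ENNReal.ofReal (‖x - u‖ ^ (t - d / q))
  have hsplit : ∀ u, u ≠ x → ENNReal.ofReal (‖g u‖ / ‖x - u‖ ^ d) = (φ * ψ) u := by
    intro u hu
    have hr : 0 < ‖x - u‖ := norm_pos_iff.mpr (sub_ne_zero.mpr hu.symm)
    have hexp : d / p + t = d + (t - d / q) := by
      rw [div_eq_mul_inv, div_eq_mul_inv]
      linear_combination d * hpq.inv_add_inv_eq_one
    simp only [Pi.mul_apply, φ, ψ]
    rw [← ENNReal.ofReal_mul (by positivity), hexp, Real.rpow_add hr]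
    field_simp
  have hφ : ∀ u, φ u ^ p = ENNReal.ofReal (‖g u‖ ^ p / ‖x - u‖ ^ (d + t * p)) := by
    intro u
    rw [ENNReal.ofReal_rpow_of_nonneg (by positivity) hp.le,
      Real.div_rpow (norm_nonneg _) (by positivity), ← Real.rpow_mul (norm_nonneg _)]
    congr 3
    field_simp
  have hψ : ∀ u, ψ u ^ q = ENNReal.ofReal (‖x - u‖ ^ (t * q - d)) := by
    intro u
    rw [ENNReal.ofReal_rpow_of_nonneg (by positivity) hq.le, ← Real.rpow_mul (norm_nonneg _)]
    congr 2
    field_simp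
  calc ∫⁻ u in A, ENNReal.ofReal (‖g u‖ / ‖x - u‖ ^ d) ∂μ
      = ∫⁻ u in A, (φ * ψ) u ∂μ :=
        lintegral_congr_ae (ae_restrict_of_ae ((Measure.ae_ne μ x).mono hsplit))
    _ ≤ (∫⁻ u in A, φ u ^ p ∂μ) ^ (1 / p) * (∫⁻ u in A, ψ u ^ q ∂μ) ^ (1 / q) :=
        ENNReal.lintegral_mul_le_Lp_mul_Lq _ hpq
          (hg.restrict.norm.aemeasurable.div (by fun_prop)).ennreal_ofReal (by fun_prop)
    _ ≤ _ := by
        simp_rw [hφ, hψ]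
        gcongr
        exact rpow_lintegral_rpow_norm_sub_le_of_subset_ball μ hq ht hR x hA

theorem ofReal_norm_setIntegral_smul_le_of_subset_ball {F : Type*} [NormedAddCommGroup F]
    [NormedSpace ℝ F] {p q t R C₀ : ℝ} (hpq : p.HolderConjugate q) (ht : 0 < t) (hR : 0 < R)
    (hC₀ : 0 ≤ C₀) {K : E → ℝ} (hK : ∀ z, z ≠ 0 → |K z| ≤ C₀ / ‖z‖ ^ (dim E : ℝ)) (x : E)
    {A : Set E} (hA : A ⊆ ball x R) {g : E → F} (hg : AEStronglyMeasurable g μ) :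
    ENNReal.ofReal ‖∫ u in A, K (x - u) • g u ∂μ‖ ≤
      ENNReal.ofReal (C₀ * (dim E * μ.real (ball 0 1) / (t * q)) ^ (1 / q) * R ^ t) *
        (∫⁻ u in A, ENNReal.ofReal (‖g u‖ ^ p / ‖x - u‖ ^ (dim E + t * p)) ∂μ) ^ (1 / p) := by
  have hHolder := lintegral_div_rpow_finrank_le_of_subset_ball μ hpq ht hR x hA hg
  calc _ ≤ ENNReal.ofReal C₀ *
        ((∫⁻ u in A, ENNReal.ofReal (‖g u‖ ^ p / ‖x - u‖ ^ (dim E + t * p)) ∂μ) ^ (1 / p) *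
          ENNReal.ofReal ((dim E * μ.real (ball 0 1) / (t * q)) ^ (1 / q) * R ^ t)) := by
        grw [ofReal_norm_setIntegral_smul_le μ x A hC₀ hK g, hHolder]
    _ = _ := by
        rw [mul_assoc, ENNReal.ofReal_mul hC₀]
        ring

theorem ofReal_rpow_norm_setIntegral_div_le {F : Type*} [NormedAddCommGroup F] [NormedSpace ℝ F]
    {p q s t C₀ : ℝ} (hpq : p.HolderConjugate q) (ht : 0 < t) (hC₀ : 0 ≤ C₀) {K : E → ℝ}
    (hK : ∀ z, z ≠ 0 → |K z| ≤ C₀ / ‖z‖ ^ (dim E : ℝ)) (Ω : Set E) {f : E → F}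
    (hf : StronglyMeasurable f) {x y : E} (hxy : y ≠ x) :
    ENNReal.ofReal (‖∫ u in Ω ∩ {u | ‖x - u‖ < 4 * ‖x - y‖}, K (x - u) • (f u - f x) ∂μ‖ ^ p /
        ‖x - y‖ ^ (dim E + s * p)) ≤
      ENNReal.ofReal ((C₀ * (dim E * μ.real (ball 0 1) / (t * q)) ^ (1 / q) * 4 ^ t) ^ p *
          ‖x - y‖ ^ ((t - s) * p - dim E)) *
        ∫⁻ u in Ω ∩ {u | ‖x - u‖ < 4 * ‖x - y‖},
          ENNReal.ofReal (‖f u - f x‖ ^ p / ‖x - u‖ ^ (dim E + t * p)) ∂μ := by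
  have hp := hpq.pos
  have hq := hpq.symm.pos
  have hr : 0 < ‖x - y‖ := norm_pos_iff.mpr (sub_ne_zero.mpr hxy.symm)
  set κ := C₀ * (dim E * μ.real (ball 0 1) / (t * q)) ^ (1 / q)
  set J := ∫⁻ u in Ω ∩ {u | ‖x - u‖ < 4 * ‖x - y‖},
    ENNReal.ofReal (‖f u - f x‖ ^ p / ‖x - u‖ ^ (dim E + t * p)) ∂μ
  have hA : Ω ∩ {u | ‖x - u‖ < 4 * ‖x - y‖} ⊆ ball x (4 * ‖x - y‖) := fun u hu => by
    simpa [dist_eq_norm, norm_sub_rev u x] using hu.2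
  have hg := ofReal_norm_setIntegral_smul_le_of_subset_ball μ hpq ht (by positivity) hC₀ hK x hA
    (g := fun u => f u - f x) (hf.sub (stronglyMeasurable_const (b := f x))).aestronglyMeasurable
  have hκ : 0 ≤ κ := mul_nonneg hC₀ (by positivity)
  calc ENNReal.ofReal (‖∫ u in Ω ∩ {u | ‖x - u‖ < 4 * ‖x - y‖}, K (x - u) • (f u - f x) ∂μ‖ ^ p /
        ‖x - y‖ ^ (dim E + s * p))
      = ENNReal.ofReal ‖∫ u in Ω ∩ {u | ‖x - u‖ < 4 * ‖x - y‖}, K (x - u) • (f u - f x) ∂μ‖ ^ p *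
          ENNReal.ofReal (‖x - y‖ ^ (dim E + s * p))⁻¹ := by
        rw [div_eq_mul_inv, ENNReal.ofReal_mul (by positivity),
          ENNReal.ofReal_rpow_of_nonneg (norm_nonneg _) hp.le]
    _ ≤ (ENNReal.ofReal (κ * (4 * ‖x - y‖) ^ t) * J ^ (1 / p)) ^ p *
          ENNReal.ofReal (‖x - y‖ ^ (dim E + s * p))⁻¹ := by
        gcongr
    _ = ENNReal.ofReal ((κ * 4 ^ t) ^ p * ‖x - y‖ ^ ((t - s) * p - dim E)) * J := by
        rw [ENNReal.mul_rpow_of_nonneg _ _ hp.le, ← ENNReal.rpow_mul, one_div_mul_cancel hp.ne',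
          ENNReal.rpow_one, ENNReal.ofReal_rpow_of_nonneg (by positivity) hp.le, mul_right_comm,
          ← ENNReal.ofReal_mul (by positivity)]
        congr 2
        rw [Real.mul_rpow (by norm_num) hr.le, ← mul_assoc,
          Real.mul_rpow (by positivity) (by positivity), ← Real.rpow_mul hr.le, mul_assoc,
          ← Real.rpow_neg hr.le, ← Real.rpow_add hr]
        ring_nf

theorem lintegral_compl_closedBall_rpow_mul_ofReal_div {p s t a ρ : ℝ} (hp : 0 < p)
    (hts : t < s) (ha : 0 ≤ a) (hρ : 0 < ρ) (x : E) :
    (∫⁻ y in (closedBall x (ρ / 4))ᶜ, ENNReal.ofReal (‖x - y‖ ^ ((t - s) * p - dim E)) ∂μ) *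
        ENNReal.ofReal (a / ρ ^ (dim E + t * p)) =
      ENNReal.ofReal (dim E * μ.real (ball 0 1) * 4 ^ ((s - t) * p) / ((s - t) * p)) *
        ENNReal.ofReal (a / ρ ^ (dim E + s * p)) := by
  have hst : 0 < s - t := sub_pos.mpr hts
  rw [lintegral_compl_closedBall_rpow_norm_sub μ x (by nlinarith) (div_pos hρ (by norm_num)),
    ← ENNReal.ofReal_mul' (by positivity), ← ENNReal.ofReal_mul' (by positivity)]
  congr 1
  rw [add_sub_cancel, Real.div_rpow hρ.le (by norm_num),
    show (dim E : ℝ) + t * p = (t - s) * p + (dim E + s * p) by ring, Real.rpow_add hρ,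
    show (s - t) * p = -((t - s) * p) by ring, Real.rpow_neg (by norm_num)]
  field_simp

theorem lintegral_rpow_norm_setIntegral_div_le {F : Type*} [NormedAddCommGroup F]
    [NormedSpace ℝ F] {p q s t C₀ : ℝ} (hpq : p.HolderConjugate q) (ht : 0 < t) (hts : t < s)
    (hC₀ : 0 ≤ C₀) {K : E → ℝ} (hK : ∀ z, z ≠ 0 → |K z| ≤ C₀ / ‖z‖ ^ (dim E : ℝ)) (Ω : Set E)
    {f : E → F} (hf : StronglyMeasurable f) (x : E) :
    ∫⁻ y in Ω, ENNReal.ofReal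
        (‖∫ u in Ω ∩ {u | ‖x - u‖ < 4 * ‖x - y‖}, K (x - u) • (f u - f x) ∂μ‖ ^ p /
          ‖x - y‖ ^ (dim E + s * p)) ∂μ ≤
      ENNReal.ofReal (kernelBesovConst (dim E) (μ.real (ball 0 1)) p q s t C₀) *
        ∫⁻ u in Ω, ENNReal.ofReal (‖f u - f x‖ ^ p / ‖x - u‖ ^ (dim E + s * p)) ∂μ := by
  have hp := hpq.pos
  have hq := hpq.symm.pos
  set d : ℝ := (dim E : ℝ)
  set ω := μ.real (ball 0 1)
  set c₁ := (C₀ * (d * ω / (t * q)) ^ (1 / q) * 4 ^ t) ^ p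
  set c₂ := d * ω * 4 ^ ((s - t) * p) / ((s - t) * p)
  set w : E → ℝ≥0∞ := fun y => ENNReal.ofReal (‖x - y‖ ^ ((t - s) * p - d))
  set G : E → ℝ≥0∞ := fun u => ENNReal.ofReal (‖f u - f x‖ ^ p / ‖x - u‖ ^ (d + t * p))
  have hG : Measurable G :=
    (((hf.sub stronglyMeasurable_const).norm.measurable.pow_const p).div
      (by fun_prop)).ennreal_ofReal
  have hinner : ∀ u, u ≠ x → (∫⁻ y in (closedBall x (‖x - u‖ / 4))ᶜ, w y ∂μ) * G u =
      ENNReal.ofReal c₂ * ENNReal.ofReal (‖f u - f x‖ ^ p / ‖x - u‖ ^ (d + s * p)) :=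
    fun u hu => lintegral_compl_closedBall_rpow_mul_ofReal_div μ hp hts (by positivity)
      (norm_pos_iff.mpr (sub_ne_zero.mpr hu.symm)) x
  calc ∫⁻ y in Ω, ENNReal.ofReal
        (‖∫ u in Ω ∩ {u | ‖x - u‖ < 4 * ‖x - y‖}, K (x - u) • (f u - f x) ∂μ‖ ^ p /
          ‖x - y‖ ^ (d + s * p)) ∂μ
      ≤ ∫⁻ y in Ω, ENNReal.ofReal c₁ *
          (w y * ∫⁻ u in Ω ∩ {u | ‖x - u‖ < 4 * ‖x - y‖}, G u ∂μ) ∂μ := by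
        refine lintegral_mono_ae (ae_restrict_of_ae ((Measure.ae_ne μ x).mono fun y hy => ?_))
        refine (ofReal_rpow_norm_setIntegral_div_le μ hpq ht hC₀ hK Ω hf hy).trans_eq ?_
        rw [ENNReal.ofReal_mul (by positivity), mul_assoc]
    _ = ENNReal.ofReal c₁ *
          ∫⁻ y in Ω, w y * ∫⁻ u in Ω ∩ {u | ‖x - u‖ < 4 * ‖x - y‖}, G u ∂μ ∂μ :=
        lintegral_const_mul' _ _ ENNReal.ofReal_ne_top
    _ ≤ ENNReal.ofReal c₁ *
          ∫⁻ u in Ω, (∫⁻ y in (closedBall x (‖x - u‖ / 4))ᶜ, w y ∂μ) * G u ∂μ := by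
        gcongr ENNReal.ofReal c₁ * ?_
        exact lintegral_mul_setLIntegral_le_lintegral_compl_closedBall_mul μ x Ω
          (by norm_num) (by fun_prop) hG
    _ = ENNReal.ofReal c₁ * ∫⁻ u in Ω,
          ENNReal.ofReal c₂ * ENNReal.ofReal (‖f u - f x‖ ^ p / ‖x - u‖ ^ (d + s * p)) ∂μ := by
        rw [lintegral_congr_ae (ae_restrict_of_ae ((Measure.ae_ne μ x).mono hinner))]
    _ = _ := by
        rw [lintegral_const_mul' _ _ ENNReal.ofReal_ne_top, ← mul_assoc,
          ← ENNReal.ofReal_mul (by positivity)]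
        rfl

end AddHaar

theorem kernelBesovConst_pos {E : Type*} [NormedAddCommGroup E] [NormedSpace ℝ E]
    [FiniteDimensional ℝ E] [MeasurableSpace E] [Nontrivial E] (μ : Measure E)
    [μ.IsAddHaarMeasure] {p q s t C₀ : ℝ} (hpq : p.HolderConjugate q) (ht : 0 < t)
    (hts : t < s) (hC₀ : 0 < C₀) :
    0 < kernelBesovConst (Module.finrank ℝ E) (μ.real (ball 0 1)) p q s t C₀ := by
  have hp := hpq.pos
  have hq := hpq.symm.pos
  have hst : 0 < s - t := sub_pos.mpr hts
  have hd : 0 < (Module.finrank ℝ E : ℝ) := Nat.cast_pos.mpr Module.finrank_pos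
  have hω : 0 < μ.real (ball 0 1) :=
    ENNReal.toReal_pos (measure_ball_pos μ 0 one_pos).ne' measure_ball_lt_top.ne
  unfold kernelBesovConst
  positivity

theorem stmt8_general (n : ℕ) (hn : 1 ≤ n) (p q s t C₀ : ℝ)
    (hp : 1 < p) (ht : 0 < t) (hts : t < s)
    (hpq : 1 / p + 1 / q = 1) (hC₀ : 0 < C₀) :
    ∃ C > 0, ∀ (Ω : Set (EuclideanSpace ℝ (Fin n)))
      (K : EuclideanSpace ℝ (Fin n) → ℝ) (f : EuclideanSpace ℝ (Fin n) → ℂ),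
      MeasurableSet Ω → Measurable K → Measurable f →
      (∀ x : EuclideanSpace ℝ (Fin n), x ≠ 0 → |K x| ≤ C₀ / ‖x‖ ^ (n : ℝ)) →
      (∫⁻ x in Ω, ∫⁻ y in Ω,
          ENNReal.ofReal (‖f x - f y‖ ^ p / ‖x - y‖ ^ ((n : ℝ) + s * p)) < ⊤) →
      (∫⁻ x in Ω, ∫⁻ y in Ω,
          ENNReal.ofReal
            (‖∫ u in Ω ∩ {u | ‖x - u‖ < 4 * ‖x - y‖},
                ((K (x - u) : ℝ) : ℂ) * (f u - f x)‖ ^ p /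
              ‖x - y‖ ^ ((n : ℝ) + s * p))) ≤
        ENNReal.ofReal C *
          ∫⁻ x in Ω, ∫⁻ u in Ω,
            ENNReal.ofReal (‖f u - f x‖ ^ p / ‖x - u‖ ^ ((n : ℝ) + s * p)) := by
  have : Nonempty (Fin n) := Fin.pos_iff_nonempty.mp hn
  have hpq' : p.HolderConjugate q :=
    Real.holderConjugate_iff.mpr ⟨hp, by simpa only [one_div] using hpq⟩
  have hC := kernelBesovConst_pos (volume : Measure (EuclideanSpace ℝ (Fin n))) hpq' ht hts hC₀
  rw [finrank_euclideanSpace_fin] at hC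
  refine ⟨_, hC, fun Ω K f _ _ hf hK _ => ?_⟩
  have hK' : ∀ z : EuclideanSpace ℝ (Fin n), z ≠ 0 →
      |K z| ≤ C₀ / ‖z‖ ^ (Module.finrank ℝ (EuclideanSpace ℝ (Fin n)) : ℝ) := by
    simpa only [finrank_euclideanSpace_fin] using hK
  have hbound := fun x => lintegral_rpow_norm_setIntegral_div_le volume hpq' ht hts hC₀.le hK' Ω
    hf.stronglyMeasurable x
  simp only [finrank_euclideanSpace_fin, Complex.real_smul] at hbound
  exact (lintegral_mono hbound).trans_eq (lintegral_const_mul' _ _ ENNReal.ofReal_ne_top)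

/-- Besov-type estimate for the term `g₂`:
if `|K(x-u)| ≤ C₀/|x-u|ⁿ`, then for `g₂(x,y) = ∫_{Ω ∩ {|x-u|<4|x-y|}} K(x-u)(f(u)-f(x)) du`,
`∫_Ω∫_Ω |g₂(x,y)|^p/|x-y|^{n+sp} ≤ C ∫_Ω∫_Ω |f(u)-f(x)|^p/|x-u|^{n+sp}`,
with `C = C(n,p,s,t,C₀)` only. -/
theorem stmt8 (n : ℕ) (hn : 1 ≤ n) (p q s t C₀ : ℝ)
    (hp : 1 < p) (ht : 0 < t) (hts : t < s) (hs : s < 1)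
    (hpq : 1 / p + 1 / q = 1) (hC₀ : 0 < C₀) :
    ∃ C > 0, ∀ (Ω : Set (EuclideanSpace ℝ (Fin n)))
      (K : EuclideanSpace ℝ (Fin n) → ℝ) (f : EuclideanSpace ℝ (Fin n) → ℂ),
      MeasurableSet Ω → Measurable K → Measurable f →
      (∀ x : EuclideanSpace ℝ (Fin n), x ≠ 0 → |K x| ≤ C₀ / ‖x‖ ^ (n : ℝ)) →
      (∫⁻ x in Ω, ∫⁻ y in Ω,
          ENNReal.ofReal (‖f x - f y‖ ^ p / ‖x - y‖ ^ ((n : ℝ) + s * p)) < ⊤) →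
      (∫⁻ x in Ω, ∫⁻ y in Ω,
          ENNReal.ofReal
            (‖∫ u in Ω ∩ {u | ‖x - u‖ < 4 * ‖x - y‖},
                ((K (x - u) : ℝ) : ℂ) * (f u - f x)‖ ^ p /
              ‖x - y‖ ^ ((n : ℝ) + s * p))) ≤
        ENNReal.ofReal C *
          ∫⁻ x in Ω, ∫⁻ u in Ω,
            ENNReal.ofReal (‖f u - f x‖ ^ p / ‖x - u‖ ^ ((n : ℝ) + s * p)) :=
  stmt8_general n hn p q s t C₀ hp ht hts hpq hC₀
end

section
/- Let Ω ⊂ ℂ be bounded with diameter d, and let k : Ω × Ω → ℂ satisfy |k(z,w)| ≤ C/|z-w| and |k(z', w) - k(z, w)| ≤ C|z - z'|/|z - w|² whenever |z - w| > 2|z - z'|. Define T f(z) = ∫_Ω k(z,w) f(w) dw for bounded f. Then for all z₁, z₂ ∈ Ω, |Tf(z₁) - Tf(z₂)| ≤ C' |z₁ - z₂| (1 + log(d/|z₁ - z₂|)) ‖f‖_∞, where C' depends only on C. -/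
/-!
Write `Tf(z₁) - Tf(z₂) = ∫_Ω (k(z₁,w) - k(z₂,w)) f(w) dw` and split `Ω` at the disc of radius
`2δ` about `z₁`, where `δ = |z₁ - z₂|`. On the disc, the size bound on `k(z₁,·)` and `k(z₂,·)` and
`∫_{|w-z| ≤ r} |w-z|⁻¹ dw = 2πr` give a contribution `O(δ)`. Off the disc, the smoothness bound
and `∫_{δ ≤ |w-z₁| ≤ d} |w-z₁|⁻² dw = 2π log(d/δ)` give `O(δ log(d/δ))`. Both integrals are
computed in polar coordinates.
-/

open MeasureTheory Metric Set Real
open scoped ENNReal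

theorem lintegral_comp_norm_complex (F : ℝ → ℝ≥0∞) (hF : Measurable F) :
    ∫⁻ x : ℂ, F ‖x‖ = ENNReal.ofReal (2 * π) * ∫⁻ r in Ioi 0, ENNReal.ofReal r * F r := by
  have hdim : Module.finrank ℝ ℂ = 2 := Complex.finrank_real_complex
  have hpolar :=
    (Measure.measurePreserving_homeomorphUnitSphereProd (volume : Measure ℂ)).lintegral_comp_emb
      (Homeomorph.measurableEmbedding _) (F ∘ Subtype.val ∘ Prod.snd)
  calc ∫⁻ x : ℂ, F ‖x‖
      = ∫⁻ x : ({0}ᶜ : Set ℂ), F ‖x.1‖ ∂((volume : Measure ℂ).comap Subtype.val) := by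
        rw [lintegral_subtype_comap (measurableSet_singleton 0).compl (fun x => F ‖x‖),
          restrict_compl_singleton]
    _ = ∫⁻ p : sphere (0 : ℂ) 1 × Ioi (0 : ℝ), F p.2
          ∂((volume : Measure ℂ).toSphere.prod (.volumeIoiPow (Module.finrank ℝ ℂ - 1))) := by
        simpa [homeomorphUnitSphereProd] using hpolar
    _ = (volume : Measure ℂ).toSphere univ *
          ∫⁻ r : Ioi (0 : ℝ), F r ∂(.volumeIoiPow (Module.finrank ℝ ℂ - 1)) := by
        rw [lintegral_prod (fun p : sphere (0 : ℂ) 1 × Ioi (0 : ℝ) => F p.2)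
          (hF.comp (measurable_subtype_coe.comp measurable_snd)).aemeasurable]
        dsimp only
        rw [lintegral_const, mul_comm]
    _ = ENNReal.ofReal (2 * π) * ∫⁻ r in Ioi 0, ENNReal.ofReal r * F r := by
        rw [Measure.toSphere_apply_univ, hdim, Complex.volume_ball, Measure.volumeIoiPow,
          lintegral_withDensity_eq_lintegral_mul _ (by fun_prop) (g := fun r : Ioi (0 : ℝ) => F r)
            (hF.comp measurable_subtype_coe)]
        simp only [Pi.mul_apply]
        rw [lintegral_subtype_comap measurableSet_Ioi (fun r => ENNReal.ofReal (r ^ (2 - 1)) * F r)]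
        simp [ENNReal.ofReal_mul, ENNReal.ofReal_coe_nnreal, ← NNReal.coe_real_pi]

theorem setLIntegral_preimage_norm_sub_complex (G : ℝ → ℝ≥0∞) (hG : Measurable G) {S : Set ℝ}
    (hS : MeasurableSet S) (z : ℂ) :
    ∫⁻ w in (‖· - z‖) ⁻¹' S, G ‖w - z‖ =
      ENNReal.ofReal (2 * π) * ∫⁻ r in S ∩ Ioi 0, ENNReal.ofReal r * G r := by
  have hS' : MeasurableSet ((‖· - z‖) ⁻¹' S) := (by fun_prop : Measurable fun w : ℂ => ‖w - z‖) hS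
  calc ∫⁻ w in (‖· - z‖) ⁻¹' S, G ‖w - z‖
      = ∫⁻ w, S.indicator G ‖w - z‖ := by
        rw [← lintegral_indicator hS']
        exact lintegral_congr fun w => indicator_comp_right (fun w => ‖w - z‖)
    _ = ∫⁻ w, S.indicator G ‖w‖ := by
        simpa [sub_eq_add_neg] using lintegral_add_right_eq_self (fun w => S.indicator G ‖w‖) (-z)
    _ = ENNReal.ofReal (2 * π) * ∫⁻ r in Ioi 0, ENNReal.ofReal r * S.indicator G r :=
        lintegral_comp_norm_complex _ (hG.indicator hS)
    _ = ENNReal.ofReal (2 * π) * ∫⁻ r in S ∩ Ioi 0, ENNReal.ofReal r * G r := by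
        simp_rw [← indicator_mul_right]
        rw [lintegral_indicator hS, Measure.restrict_restrict hS]

theorem lintegral_closedBall_inv_norm_sub (z : ℂ) (R : ℝ) :
    ∫⁻ w in closedBall z R, ENNReal.ofReal ‖w - z‖⁻¹ = ENNReal.ofReal (2 * π * R) := by
  have hball : closedBall z R = (‖· - z‖) ⁻¹' Iic R := by ext; simp [dist_eq_norm]
  rw [hball, setLIntegral_preimage_norm_sub_complex (fun r => ENNReal.ofReal r⁻¹) (by fun_prop)
      measurableSet_Iic, Iic_inter_Ioi,
    setLIntegral_congr_fun measurableSet_Ioc fun r hr => by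
      rw [← ENNReal.ofReal_mul hr.1.le, mul_inv_cancel₀ hr.1.ne', ENNReal.ofReal_one],
    setLIntegral_one, Real.volume_Ioc, sub_zero, ← ENNReal.ofReal_mul (by positivity)]

theorem lintegral_closedBall_diff_ball_inv_norm_sub_sq (z : ℂ) {a R : ℝ} (ha : 0 < a)
    (haR : a ≤ R) :
    ∫⁻ w in closedBall z R \ ball z a, ENNReal.ofReal (‖w - z‖ ^ 2)⁻¹ =
      ENNReal.ofReal (2 * π * log (R / a)) := by
  have hann : closedBall z R \ ball z a = (‖· - z‖) ⁻¹' Icc a R := by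
    ext; simp [dist_eq_norm, and_comm]
  have hinv : IntegrableOn (fun r : ℝ => r⁻¹) (Icc a R) :=
    (continuousOn_inv₀.mono fun r hr => (ha.trans_le hr.1).ne').integrableOn_compact isCompact_Icc
  rw [hann, setLIntegral_preimage_norm_sub_complex (fun r => ENNReal.ofReal (r ^ 2)⁻¹)
      (by fun_prop) measurableSet_Icc, inter_eq_left.2 ((Icc_subset_Ioi_iff haR).2 ha),
    setLIntegral_congr_fun measurableSet_Icc fun r hr => by
      rw [← ENNReal.ofReal_mul (ha.trans_le hr.1).le, sq, mul_inv, ← mul_assoc,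
        mul_inv_cancel₀ (ha.trans_le hr.1).ne', one_mul],
    ← ofReal_integral_eq_lintegral_ofReal hinv
      ((ae_restrict_iff' measurableSet_Icc).2
        (.of_forall fun r hr => inv_nonneg.2 (ha.le.trans hr.1))),
    integral_Icc_eq_integral_Ioc, ← intervalIntegral.integral_of_le haR,
    integral_inv (by rw [uIcc_of_le haR]; exact fun h => ha.not_ge h.1),
    ← ENNReal.ofReal_mul (by positivity)]

section KernelEstimates

variable {Ω : Set ℂ} {k : ℂ → ℂ → ℂ} {f : ℂ → ℂ} {C M : ℝ}

theorem lintegral_norm_kernel_mul_le (hsize : ∀ z w, z ≠ w → ‖k z w‖ ≤ C / ‖z - w‖)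
    (hf : ∀ w ∈ Ω, ‖f w‖ ≤ M) (hC : 0 ≤ C) (hM : 0 ≤ M) (hΩ : MeasurableSet Ω) {z : ℂ} {R : ℝ}
    (hR : Ω ⊆ closedBall z R) :
    ∫⁻ w in Ω, ENNReal.ofReal ‖k z w * f w‖ ≤ ENNReal.ofReal (C * M * (2 * π * R)) :=
  calc ∫⁻ w in Ω, ENNReal.ofReal ‖k z w * f w‖
      ≤ ∫⁻ w in Ω, ENNReal.ofReal (C * M) * ENNReal.ofReal ‖w - z‖⁻¹ := by
        refine lintegral_mono_ae ?_
        filter_upwards [ae_restrict_of_ae (volume.ae_ne z), ae_restrict_mem hΩ] with w hwz hw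
        rw [← ENNReal.ofReal_mul (by positivity)]
        refine ENNReal.ofReal_le_ofReal ?_
        calc ‖k z w * f w‖ = ‖k z w‖ * ‖f w‖ := norm_mul _ _
          _ ≤ C / ‖z - w‖ * M :=
            mul_le_mul (hsize z w hwz.symm) (hf w hw) (norm_nonneg _) (by positivity)
          _ = C * M * ‖w - z‖⁻¹ := by rw [norm_sub_rev]; ring
    _ = ENNReal.ofReal (C * M) * ∫⁻ w in Ω, ENNReal.ofReal ‖w - z‖⁻¹ :=
        lintegral_const_mul' _ _ ENNReal.ofReal_ne_top
    _ ≤ ENNReal.ofReal (C * M) * ∫⁻ w in closedBall z R, ENNReal.ofReal ‖w - z‖⁻¹ := by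
        gcongr
    _ = ENNReal.ofReal (C * M * (2 * π * R)) := by
        rw [lintegral_closedBall_inv_norm_sub, ← ENNReal.ofReal_mul (by positivity)]

theorem integrableOn_kernel_mul (hkm : Measurable (Function.uncurry k)) (hfm : Measurable f)
    (hsize : ∀ z w, z ≠ w → ‖k z w‖ ≤ C / ‖z - w‖) (hf : ∀ w ∈ Ω, ‖f w‖ ≤ M) (hC : 0 ≤ C)
    (hM : 0 ≤ M) (hΩ : MeasurableSet Ω) (hΩb : Bornology.IsBounded Ω) (z : ℂ) :
    IntegrableOn (fun w => k z w * f w) Ω := by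
  obtain ⟨R, hR⟩ := hΩb.subset_closedBall z
  refine ⟨((hkm.comp measurable_prodMk_left).mul hfm).aestronglyMeasurable, ?_⟩
  rw [hasFiniteIntegral_iff_norm]
  exact (lintegral_norm_kernel_mul_le hsize hf hC hM hΩ hR).trans_lt ENNReal.ofReal_lt_top

theorem lintegral_inter_closedBall_norm_kernel_sub_mul_le (hkm : Measurable (Function.uncurry k))
    (hfm : Measurable f) (hsize : ∀ z w, z ≠ w → ‖k z w‖ ≤ C / ‖z - w‖) (hf : ∀ w ∈ Ω, ‖f w‖ ≤ M)
    (hC : 0 ≤ C) (hM : 0 ≤ M) (hΩ : MeasurableSet Ω) (z₁ z₂ : ℂ) (r : ℝ) :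
    ∫⁻ w in Ω ∩ closedBall z₁ r, ENNReal.ofReal ‖(k z₁ w - k z₂ w) * f w‖ ≤
      ENNReal.ofReal (C * M * (2 * π * r)) +
        ENNReal.ofReal (C * M * (2 * π * (r + ‖z₁ - z₂‖))) := by
  have hf' : ∀ w ∈ Ω ∩ closedBall z₁ r, ‖f w‖ ≤ M := fun w hw => hf w hw.1
  have hΩ' : MeasurableSet (Ω ∩ closedBall z₁ r) := hΩ.inter measurableSet_closedBall
  have hball : closedBall z₁ r ⊆ closedBall z₂ (r + ‖z₁ - z₂‖) :=
    closedBall_subset_closedBall' (by rw [dist_eq_norm])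
  calc ∫⁻ w in Ω ∩ closedBall z₁ r, ENNReal.ofReal ‖(k z₁ w - k z₂ w) * f w‖
      ≤ ∫⁻ w in Ω ∩ closedBall z₁ r,
          (ENNReal.ofReal ‖k z₁ w * f w‖ + ENNReal.ofReal ‖k z₂ w * f w‖) := by
        refine lintegral_mono fun w => ?_
        rw [← ENNReal.ofReal_add (norm_nonneg _) (norm_nonneg _), sub_mul]
        exact ENNReal.ofReal_le_ofReal (norm_sub_le _ _)
    _ = (∫⁻ w in Ω ∩ closedBall z₁ r, ENNReal.ofReal ‖k z₁ w * f w‖) +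
          ∫⁻ w in Ω ∩ closedBall z₁ r, ENNReal.ofReal ‖k z₂ w * f w‖ :=
        lintegral_add_left ((hkm.comp measurable_prodMk_left).mul hfm).norm.ennreal_ofReal _
    _ ≤ _ := add_le_add (lintegral_norm_kernel_mul_le hsize hf' hC hM hΩ' inter_subset_right)
        (lintegral_norm_kernel_mul_le hsize hf' hC hM hΩ' (inter_subset_right.trans hball))

theorem lintegral_diff_closedBall_norm_kernel_sub_mul_le
    (hsmooth : ∀ z z' w, 2 * ‖z - z'‖ < ‖z - w‖ → ‖k z' w - k z w‖ ≤ C * ‖z - z'‖ / ‖z - w‖ ^ 2)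
    (hf : ∀ w ∈ Ω, ‖f w‖ ≤ M) (hC : 0 ≤ C) (hM : 0 ≤ M) (hΩ : MeasurableSet Ω) {z₁ z₂ : ℂ}
    {d : ℝ} (hd : Ω ⊆ closedBall z₁ d) (hz : z₁ ≠ z₂) (hδd : ‖z₁ - z₂‖ ≤ d) :
    ∫⁻ w in Ω \ closedBall z₁ (2 * ‖z₁ - z₂‖), ENNReal.ofReal ‖(k z₁ w - k z₂ w) * f w‖ ≤
      ENNReal.ofReal (C * ‖z₁ - z₂‖ * M * (2 * π * log (d / ‖z₁ - z₂‖))) := by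
  set δ := ‖z₁ - z₂‖
  have hδ : 0 < δ := norm_pos_iff.2 (sub_ne_zero.2 hz)
  have hann : Ω \ closedBall z₁ (2 * δ) ⊆ closedBall z₁ d \ ball z₁ δ := fun w hw =>
    ⟨hd hw.1, fun hb => hw.2 (ball_subset_closedBall.trans
      (closedBall_subset_closedBall (by linarith)) hb)⟩
  calc ∫⁻ w in Ω \ closedBall z₁ (2 * δ), ENNReal.ofReal ‖(k z₁ w - k z₂ w) * f w‖
      ≤ ∫⁻ w in Ω \ closedBall z₁ (2 * δ),
          ENNReal.ofReal (C * δ * M) * ENNReal.ofReal (‖w - z₁‖ ^ 2)⁻¹ := by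
        refine setLIntegral_mono' (hΩ.diff measurableSet_closedBall) fun w hw => ?_
        have hfar : 2 * δ < ‖z₁ - w‖ := by simpa [dist_eq_norm, norm_sub_rev] using hw.2
        rw [← ENNReal.ofReal_mul (by positivity)]
        refine ENNReal.ofReal_le_ofReal ?_
        calc ‖(k z₁ w - k z₂ w) * f w‖ = ‖k z₂ w - k z₁ w‖ * ‖f w‖ := by
              rw [norm_mul, norm_sub_rev]
          _ ≤ C * δ / ‖z₁ - w‖ ^ 2 * M :=
            mul_le_mul (hsmooth z₁ z₂ w hfar) (hf w hw.1) (norm_nonneg _) (by positivity)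
          _ = C * δ * M * (‖w - z₁‖ ^ 2)⁻¹ := by rw [norm_sub_rev]; ring
    _ = ENNReal.ofReal (C * δ * M) *
          ∫⁻ w in Ω \ closedBall z₁ (2 * δ), ENNReal.ofReal (‖w - z₁‖ ^ 2)⁻¹ :=
        lintegral_const_mul' _ _ ENNReal.ofReal_ne_top
    _ ≤ ENNReal.ofReal (C * δ * M) *
          ∫⁻ w in closedBall z₁ d \ ball z₁ δ, ENNReal.ofReal (‖w - z₁‖ ^ 2)⁻¹ := by
        gcongr
    _ = ENNReal.ofReal (C * δ * M * (2 * π * log (d / δ))) := by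
        rw [lintegral_closedBall_diff_ball_inv_norm_sub_sq z₁ hδ hδd,
          ← ENNReal.ofReal_mul (by positivity)]

end KernelEstimates

/-- log-Lipschitz estimate. If `k` satisfies the standard kernel bounds
`|k(z,w)| ≤ C/|z-w|` and `|k(z',w) - k(z,w)| ≤ C|z-z'|/|z-w|²` for `|z-w| > 2|z-z'|`,
then `Tf(z) = ∫_Ω k(z,w) f(w) dw` satisfies
`|Tf(z₁) - Tf(z₂)| ≤ C' |z₁-z₂| (1 + log(d/|z₁-z₂|)) ‖f‖_∞`, with `C'` depending only
on `C`. -/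
theorem stmt10 (C : ℝ) (hC : 0 < C) :
    ∃ C' > 0, ∀ (Ω : Set ℂ) (k : ℂ → ℂ → ℂ) (f : ℂ → ℂ) (Mf : ℝ),
      MeasurableSet Ω → Bornology.IsBounded Ω →
      Measurable (Function.uncurry k) → Measurable f →
      (∀ z w : ℂ, z ≠ w → ‖k z w‖ ≤ C / ‖z - w‖) →
      (∀ z z' w : ℂ, 2 * ‖z - z'‖ < ‖z - w‖ →
        ‖k z' w - k z w‖ ≤ C * ‖z - z'‖ / ‖z - w‖ ^ 2) →
      (∀ w ∈ Ω, ‖f w‖ ≤ Mf) →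
      ∀ z₁ ∈ Ω, ∀ z₂ ∈ Ω, z₁ ≠ z₂ →
        ‖(∫ w in Ω, k z₁ w * f w) - ∫ w in Ω, k z₂ w * f w‖ ≤
          C' * ‖z₁ - z₂‖ * (1 + Real.log (diam Ω / ‖z₁ - z₂‖)) * Mf := by
  refine ⟨10 * π * C, by positivity, ?_⟩
  intro Ω k f M hΩ hΩb hkm hfm hsize hsmooth hf z₁ hz₁ z₂ hz₂ hz
  set δ := ‖z₁ - z₂‖
  have hδ : 0 < δ := norm_pos_iff.2 (sub_ne_zero.2 hz)
  have hδd : δ ≤ diam Ω := by simpa [dist_eq_norm] using dist_le_diam_of_mem hΩb hz₁ hz₂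
  have hM : 0 ≤ M := (norm_nonneg _).trans (hf z₁ hz₁)
  have hlog : 0 ≤ log (diam Ω / δ) := log_nonneg ((one_le_div hδ).2 hδd)
  have hΩd : Ω ⊆ closedBall z₁ (diam Ω) := fun w hw => dist_le_diam_of_mem hΩb hw hz₁
  rw [← integral_sub (integrableOn_kernel_mul hkm hfm hsize hf hC.le hM hΩ hΩb z₁)
    (integrableOn_kernel_mul hkm hfm hsize hf hC.le hM hΩ hΩb z₂)]
  simp_rw [← sub_mul]
  refine (norm_integral_le_lintegral_norm _).trans
    (ENNReal.toReal_le_of_le_ofReal (by positivity) ?_)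
  rw [← lintegral_inter_add_sdiff _ Ω (measurableSet_closedBall (x := z₁) (ε := 2 * δ))]
  refine (add_le_add
    (lintegral_inter_closedBall_norm_kernel_sub_mul_le hkm hfm hsize hf hC.le hM hΩ z₁ z₂ (2 * δ))
    (lintegral_diff_closedBall_norm_kernel_sub_mul_le hsmooth hf hC.le hM hΩ hΩd hz hδd)).trans ?_
  rw [← ENNReal.ofReal_add (by positivity) (by positivity),
    ← ENNReal.ofReal_add (by positivity) (by positivity)]
  refine ENNReal.ofReal_le_ofReal ?_
  nlinarith [mul_nonneg (mul_nonneg (mul_nonneg (mul_nonneg pi_pos.le hC.le) hM) hδ.le) hlog]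
end
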